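/- Let (S, A, P, R, γ) be a finite Markov decision process, π a stationary policy with Bellman operator T and π-bisimulation operator F. If V : S → ℝ and d : S × S → [0,∞) satisfy |V(s) − V(t)| ≤ d(s, t) for all s, t ∈ S, then |(T V)(s) − (T V)(t)| ≤ F(d)(s, t) for all s, t ∈ S. -/

import Mathlib

/-- A probability distribution on a finite set, represented as a nonnegative
function summing to one. -/
def IsProb {X : Type*} [Fintype X] (μ : X → ℝ) : Prop :=
  (∀ x, 0 ≤ μ x) ∧ ∑ x, μ x = 1

/-- A coupling of `μ ∈ Δ(X)` and `ν ∈ Δ(Y)`: a probability distribution on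
`X × Y` whose first marginal is `μ` and whose second marginal is `ν`. -/
def IsCoupling {X Y : Type*} [Fintype X] [Fintype Y]
    (θ : X × Y → ℝ) (μ : X → ℝ) (ν : Y → ℝ) : Prop :=
  IsProb θ ∧ (∀ x, ∑ y, θ (x, y) = μ x) ∧ (∀ y, ∑ x, θ (x, y) = ν y)

/-- The 1-Wasserstein (optimal transport) cost between `μ ∈ Δ(X)` and `ν ∈ Δ(Y)`
with ground cost `d`. -/
noncomputable def Wass {X Y : Type*} [Fintype X] [Fintype Y]
    (d : X → Y → ℝ) (μ : X → ℝ) (ν : Y → ℝ) : ℝ :=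
  sInf {c | ∃ θ : X × Y → ℝ, IsCoupling θ μ ν ∧ c = ∑ p : X × Y, θ p * d p.1 p.2}

/-- `R^π_s = ∑ₐ π(a|s) R(s,a)`, the expected immediate reward of policy `π` at `s`. -/
def Rpi {S A : Type*} [Fintype A] (R : S → A → ℝ) (π : S → A → ℝ) (s : S) : ℝ :=
  ∑ a, π s a * R s a

/-- `P^π_s(s') = ∑ₐ π(a|s) P(s'|s,a)`, the state-transition kernel induced by `π`. -/
def Ppi {S A : Type*} [Fintype A] (P : S → A → S → ℝ) (π : S → A → ℝ) (s s' : S) : ℝ :=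
  ∑ a, π s a * P s a s'

/-- The Bellman operator of policy `π`:
`(T V)(s) = R^π_s + γ ∑_{s'} P^π_s(s') V(s')`. -/
def bellman {S A : Type*} [Fintype S] [Fintype A]
    (γ : ℝ) (R : S → A → ℝ) (P : S → A → S → ℝ) (π : S → A → ℝ)
    (V : S → ℝ) (s : S) : ℝ :=
  Rpi R π s + γ * ∑ s', Ppi P π s s' * V s'

/-- The π-bisimulation operator:
`F(d)(s,t) = |R^π_s − R^π_t| + γ W_d(P^π_s, P^π_t)`. -/
noncomputable def bisimF {S A : Type*} [Fintype S] [Fintype A]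
    (γ : ℝ) (R : S → A → ℝ) (P : S → A → S → ℝ) (π : S → A → ℝ)
    (d : S → S → ℝ) (s t : S) : ℝ :=
  |Rpi R π s - Rpi R π t| + γ * Wass d (Ppi P π s) (Ppi P π t)

/-!
For any coupling `θ` of `P^π_s` and `P^π_t`, the difference of the expectations of `V` is
`∑ θ(x, y) (V x - V y)`, which is at most `∑ θ(x, y) d(x, y)` since `θ ≥ 0`; the product coupling
shows that the set of transport costs is nonempty, so the bound passes to its infimum `W_d`.
The reward terms are handled by the triangle inequality.
-/

theorem IsProb.isCoupling_mul {X Y : Type*} [Fintype X] [Fintype Y]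
    {μ : X → ℝ} {ν : Y → ℝ} (hμ : IsProb μ) (hν : IsProb ν) :
    IsCoupling (fun p => μ p.1 * ν p.2) μ ν := by
  refine ⟨⟨fun p => mul_nonneg (hμ.1 _) (hν.1 _), ?_⟩, fun x => ?_, fun y => ?_⟩
  · simp [Fintype.sum_prod_type, ← Finset.mul_sum, hμ.2, hν.2]
  · simp [← Finset.mul_sum, hν.2]
  · simp [← Finset.sum_mul, hμ.2]

namespace IsCoupling

variable {X Y : Type*} [Fintype X] [Fintype Y] {θ : X × Y → ℝ} {μ : X → ℝ} {ν : Y → ℝ}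

theorem sum_mul_fst (h : IsCoupling θ μ ν) (f : X → ℝ) :
    ∑ x, μ x * f x = ∑ p : X × Y, θ p * f p.1 := by
  rw [Fintype.sum_prod_type]
  exact Finset.sum_congr rfl fun x _ => by rw [← h.2.1 x, Finset.sum_mul]

theorem sum_mul_snd (h : IsCoupling θ μ ν) (g : Y → ℝ) :
    ∑ y, ν y * g y = ∑ p : X × Y, θ p * g p.2 := by
  rw [Fintype.sum_prod_type_right]
  exact Finset.sum_congr rfl fun y _ => by rw [← h.2.2 y, Finset.sum_mul]

theorem abs_sub_le_sum_mul (h : IsCoupling θ μ ν) {f : X → ℝ} {g : Y → ℝ} {d : X → Y → ℝ}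
    (hfg : ∀ x y, |f x - g y| ≤ d x y) :
    |∑ x, μ x * f x - ∑ y, ν y * g y| ≤ ∑ p : X × Y, θ p * d p.1 p.2 := by
  rw [h.sum_mul_fst, h.sum_mul_snd, ← Finset.sum_sub_distrib]
  refine (Finset.abs_sum_le_sum_abs _ _).trans (Finset.sum_le_sum fun p _ => ?_)
  rw [← mul_sub, abs_mul, abs_of_nonneg (h.1.1 p)]
  exact mul_le_mul_of_nonneg_left (hfg p.1 p.2) (h.1.1 p)

end IsCoupling

theorem abs_sub_le_Wass {X Y : Type*} [Fintype X] [Fintype Y]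
    {μ : X → ℝ} {ν : Y → ℝ} (hμ : IsProb μ) (hν : IsProb ν)
    {f : X → ℝ} {g : Y → ℝ} {d : X → Y → ℝ} (hfg : ∀ x y, |f x - g y| ≤ d x y) :
    |∑ x, μ x * f x - ∑ y, ν y * g y| ≤ Wass d μ ν := by
  refine le_csInf ⟨_, _, hμ.isCoupling_mul hν, rfl⟩ ?_
  rintro c ⟨θ, hθ, rfl⟩
  exact hθ.abs_sub_le_sum_mul hfg

theorem isProb_Ppi {S A : Type*} [Fintype S] [Fintype A]
    {P : S → A → S → ℝ} (hP : ∀ s a, IsProb (P s a))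
    {π : S → A → ℝ} (hπ : ∀ s, IsProb (π s)) (s : S) : IsProb (Ppi P π s) := by
  refine ⟨fun s' => Finset.sum_nonneg fun a _ => mul_nonneg ((hπ s).1 a) ((hP s a).1 s'), ?_⟩
  simp only [Ppi]
  rw [Finset.sum_comm]
  simp [← Finset.mul_sum, (hP s _).2, (hπ s).2]

theorem bellman_step_abs_sub_le_bisimF_general {S A : Type*} [Fintype S] [Fintype A]
    (γ : ℝ) (hγ0 : 0 < γ)
    (P : S → A → S → ℝ) (hP : ∀ s a, IsProb (P s a))
    (R : S → A → ℝ)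
    (π : S → A → ℝ) (hπ : ∀ s, IsProb (π s))
    (V : S → ℝ) (d : S → S → ℝ)
    (hVd : ∀ s t, |V s - V t| ≤ d s t) :
    ∀ s t, |bellman γ R P π V s - bellman γ R P π V t| ≤ bisimF γ R P π d s t := by
  intro s t
  have hW := abs_sub_le_Wass (isProb_Ppi hP hπ s) (isProb_Ppi hP hπ t) hVd
  calc |bellman γ R P π V s - bellman γ R P π V t|
      = |(Rpi R π s - Rpi R π t)
          + γ * (∑ s', Ppi P π s s' * V s' - ∑ s', Ppi P π t s' * V s')| := by
        simp only [bellman]; congr 1; ring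
    _ ≤ |Rpi R π s - Rpi R π t|
          + γ * |∑ s', Ppi P π s s' * V s' - ∑ s', Ppi P π t s' * V s'| := by
        exact (abs_add_le _ _).trans_eq (by rw [abs_mul, abs_of_pos hγ0])
    _ ≤ bisimF γ R P π d s t := by
        rw [bisimF]; gcongr

/-- one step of the Bellman operator preserves domination by the
π-bisimulation operator: if `|V(s) − V(t)| ≤ d(s,t)` for all `s, t`, then
`|(T V)(s) − (T V)(t)| ≤ F(d)(s,t)` for all `s, t`. -/
theorem bellman_step_abs_sub_le_bisimF {S A : Type*} [Fintype S] [Fintype A]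
    (γ : ℝ) (hγ0 : 0 < γ) (hγ1 : γ < 1)
    (P : S → A → S → ℝ) (hP : ∀ s a, IsProb (P s a))
    (R : S → A → ℝ) (hR : ∀ s a, 0 ≤ R s a ∧ R s a ≤ 1 - γ)
    (π : S → A → ℝ) (hπ : ∀ s, IsProb (π s))
    (V : S → ℝ) (d : S → S → ℝ) (hd0 : ∀ s t, 0 ≤ d s t)
    (hVd : ∀ s t, |V s - V t| ≤ d s t) :
    ∀ s t, |bellman γ R P π V s - bellman γ R P π V t| ≤ bisimF γ R P π d s t :=
  bellman_step_abs_sub_le_bisimF_general γ hγ0 P hP R π hπ V d hVd
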